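/- (Pullback of contraction metric, state-and-input version / Lemma 2) Let φ : ℝⁿ → ℝⁿ be a diffeomorphism with Jacobian Θ(x), f' = φ_* f, and suppose G satisfies the state-and-input contraction inequality Xᵀ((∂f'/∂y)ᵀG + G(∂f'/∂y) + (∂G/∂y)f')X + 2Yᵀ(∂f'/∂u)ᵀGX ≤ −λXᵀGX + α(XᵀGX)^{1/2}(YᵀY)^{1/2} for all y, u, X ∈ ℝⁿ, Y ∈ ℝ^m, with λ > 0 and α ≥ 0. Then φ*G, given by (φ*G)(x) = Θ(x)ᵀG(φ(x))Θ(x), satisfies the same inequality (with the same λ and α) for the system ẋ = f(x, u). -/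

import Mathlib

open Matrix

attribute [local instance] Matrix.frobeniusSeminormedAddCommGroup
  Matrix.frobeniusNormedAddCommGroup Matrix.frobeniusNormedSpace

/-- The pullback metric `(φ*G)(x) = Θ(x)ᵀ G(φ(x)) Θ(x)`. -/
def pullbackMetric {n : ℕ} (Θ G : (Fin n → ℝ) → Matrix (Fin n) (Fin n) ℝ)
    (φ : (Fin n → ℝ) → (Fin n → ℝ)) : (Fin n → ℝ) → Matrix (Fin n) (Fin n) ℝ :=
  fun x => (Θ x)ᵀ * G (φ x) * Θ x

section Aux

/-- `mulVec` as a continuous bilinear map. -/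
noncomputable def mulVecL (n m : ℕ) :
    Matrix (Fin n) (Fin m) ℝ →L[ℝ] (Fin m → ℝ) →L[ℝ] (Fin n → ℝ) :=
  LinearMap.toContinuousLinearMap
    { toFun := fun M => LinearMap.toContinuousLinearMap M.mulVecLin
      map_add' := fun M N => by ext v i; simp [Matrix.add_mulVec]
      map_smul' := fun c M => by ext v i; simp [Matrix.smul_mulVec] }

@[simp] lemma mulVecL_apply {n m : ℕ} (M : Matrix (Fin n) (Fin m) ℝ) (v : Fin m → ℝ) :
    mulVecL n m M v = M.mulVec v := rfl

/-- dot product as a continuous bilinear map. -/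
noncomputable def dotL (n : ℕ) : (Fin n → ℝ) →L[ℝ] (Fin n → ℝ) →L[ℝ] ℝ :=
  LinearMap.toContinuousLinearMap
    { toFun := fun v => LinearMap.toContinuousLinearMap
        { toFun := fun w => v ⬝ᵥ w
          map_add' := fun a b => dotProduct_add v a b
          map_smul' := fun c a => by simp }
      map_add' := fun a b => by ext w; simp [add_dotProduct]
      map_smul' := fun c a => by ext w; simp [smul_dotProduct] }

@[simp] lemma dotL_apply {n : ℕ} (v w : Fin n → ℝ) : dotL n v w = v ⬝ᵥ w := rfl

lemma dot_transpose_mulVec {n m : ℕ} (M : Matrix (Fin m) (Fin n) ℝ) (v : Fin n → ℝ)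
    (w : Fin m → ℝ) : v ⬝ᵥ Mᵀ.mulVec w = M.mulVec v ⬝ᵥ w := by
  rw [dotProduct_mulVec, vecMul_transpose]

end Aux
set_option maxHeartbeats 2000000 in
/-- Pullback of a contraction metric (state-and-input version, Lemma 2): if `G` satisfies
the state-and-input contraction inequality with rate `λ` and constant `α` for the
pushforward system `ẏ = f'(y,u)`, where `f'(φ(x),u) = Θ(x) f(x,u)` and `Θ` is the
Jacobian of the diffeomorphism `φ`, then `φ*G` satisfies the same inequality (same `λ`
and `α`) for `ẋ = f(x,u)`. -/
theorem pullback_contraction_metric_states_inputs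
    (n m : ℕ) (lam α : ℝ) (hlam : 0 < lam) (hα : 0 ≤ α)
    (f f' : (Fin n → ℝ) → (Fin m → ℝ) → (Fin n → ℝ))
    (φ φinv : (Fin n → ℝ) → (Fin n → ℝ))
    (hφ : ContDiff ℝ (⊤ : ℕ∞) φ) (hφinv : ContDiff ℝ (⊤ : ℕ∞) φinv)
    (hleft : Function.LeftInverse φinv φ) (hright : Function.RightInverse φinv φ)
    (Θ : (Fin n → ℝ) → Matrix (Fin n) (Fin n) ℝ)
    (hΘ : ∀ x, HasFDerivAt φ (LinearMap.toContinuousLinearMap (Θ x).mulVecLin) x)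
    (hΘinv : ∀ x, IsUnit (Θ x))
    (hpush : ∀ x u, f' (φ x) u = (Θ x).mulVec (f x u))
    (A A' : (Fin n → ℝ) → (Fin m → ℝ) → Matrix (Fin n) (Fin n) ℝ)
    (hA : ∀ u x, HasFDerivAt (fun z => f z u)
      (LinearMap.toContinuousLinearMap (A x u).mulVecLin) x)
    (hA' : ∀ u y, HasFDerivAt (fun z => f' z u)
      (LinearMap.toContinuousLinearMap (A' y u).mulVecLin) y)
    (B B' : (Fin n → ℝ) → (Fin m → ℝ) → Matrix (Fin n) (Fin m) ℝ)
    (hB : ∀ x u, HasFDerivAt (fun w => f x w)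
      (LinearMap.toContinuousLinearMap (B x u).mulVecLin) u)
    (hB' : ∀ y u, HasFDerivAt (fun w => f' y w)
      (LinearMap.toContinuousLinearMap (B' y u).mulVecLin) u)
    (G : (Fin n → ℝ) → Matrix (Fin n) (Fin n) ℝ)
    (hGpos : ∀ y, (G y).PosDef)
    (GD : (Fin n → ℝ) → ((Fin n → ℝ) →L[ℝ] Matrix (Fin n) (Fin n) ℝ))
    (hGD : ∀ y, HasFDerivAt G (GD y) y)
    (hcontr : ∀ (y : Fin n → ℝ) (u : Fin m → ℝ) (X : Fin n → ℝ) (Y : Fin m → ℝ),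
      X ⬝ᵥ (((A' y u)ᵀ * G y + G y * A' y u + GD y (f' y u)).mulVec X) +
        2 * (Y ⬝ᵥ (((B' y u)ᵀ * G y).mulVec X)) ≤
      -lam * (X ⬝ᵥ (G y).mulVec X) +
        α * Real.sqrt (X ⬝ᵥ (G y).mulVec X) * Real.sqrt (Y ⬝ᵥ Y)) :
    ∀ GpD : (Fin n → ℝ) → ((Fin n → ℝ) →L[ℝ] Matrix (Fin n) (Fin n) ℝ),
      (∀ x, HasFDerivAt (pullbackMetric Θ G φ) (GpD x) x) →
      ∀ (x : Fin n → ℝ) (u : Fin m → ℝ) (X : Fin n → ℝ) (Y : Fin m → ℝ),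
        X ⬝ᵥ (((A x u)ᵀ * pullbackMetric Θ G φ x + pullbackMetric Θ G φ x * A x u +
            GpD x (f x u)).mulVec X) +
          2 * (Y ⬝ᵥ (((B x u)ᵀ * pullbackMetric Θ G φ x).mulVec X)) ≤
        -lam * (X ⬝ᵥ (pullbackMetric Θ G φ x).mulVec X) +
          α * Real.sqrt (X ⬝ᵥ (pullbackMetric Θ G φ x).mulVec X) * Real.sqrt (Y ⬝ᵥ Y) := by
  intro GpD hGpD x u X Y
  classical
  -- `Θ z` is the matrix of `fderiv ℝ φ z`
  have hfd : ∀ z, fderiv ℝ φ z = mulVecL n n (Θ z) := fun z => (hΘ z).fderiv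
  -- the inverse of `mulVecL` on square matrices
  set eInv : ((Fin n → ℝ) →L[ℝ] (Fin n → ℝ)) →L[ℝ] Matrix (Fin n) (Fin n) ℝ :=
    LinearMap.toContinuousLinearMap
      { toFun := fun L => LinearMap.toMatrix' (L : (Fin n → ℝ) →ₗ[ℝ] (Fin n → ℝ))
        map_add' := fun a b => by simp
        map_smul' := fun c a => by simp } with heInv
  have heInvM : ∀ M : Matrix (Fin n) (Fin n) ℝ, eInv (mulVecL n n M) = M := by
    intro M
    show LinearMap.toMatrix' ((mulVecL n n M : (Fin n → ℝ) →L[ℝ] (Fin n → ℝ)) :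
      (Fin n → ℝ) →ₗ[ℝ] (Fin n → ℝ)) = M
    have h : ((mulVecL n n M : (Fin n → ℝ) →L[ℝ] (Fin n → ℝ)) :
        (Fin n → ℝ) →ₗ[ℝ] (Fin n → ℝ)) = Matrix.toLin' M := by
      ext v; simp [Matrix.toLin'_apply]
    rw [h, LinearMap.toMatrix'_toLin']
  have hMeInv : ∀ L : (Fin n → ℝ) →L[ℝ] (Fin n → ℝ), (eInv L).mulVec = L := by
    intro L
    funext w
    show (LinearMap.toMatrix' (L : (Fin n → ℝ) →ₗ[ℝ] (Fin n → ℝ))).mulVec w = L w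
    rw [← Matrix.toLin'_apply, Matrix.toLin'_toMatrix']
    rfl
  -- differentiability of the Jacobian
  have hφdiff : Differentiable ℝ (fderiv ℝ φ) :=
    (hφ.fderiv_right (m := 1) (WithTop.coe_le_coe.mpr le_top)).differentiable one_ne_zero
  set F2 : (Fin n → ℝ) →L[ℝ] (Fin n → ℝ) →L[ℝ] (Fin n → ℝ) := fderiv ℝ (fderiv ℝ φ) x with hF2def
  have hF2 : HasFDerivAt (fderiv ℝ φ) F2 x := (hφdiff x).hasFDerivAt
  have hΘeq : Θ = fun z => eInv (fderiv ℝ φ z) := by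
    funext z; rw [hfd z, heInvM]
  set ΘD : (Fin n → ℝ) →L[ℝ] Matrix (Fin n) (Fin n) ℝ := eInv.comp F2 with hΘDdef
  have hΘD : HasFDerivAt Θ ΘD x := by
    rw [hΘeq]; exact eInv.hasFDerivAt.comp x hF2
  have hΘDv : ∀ v w, (ΘD v).mulVec w = F2 v w := by
    intro v w
    have : (ΘD v).mulVec = F2 v := hMeInv (F2 v)
    rw [this]
  -- symmetry of the second derivative
  have hsymm : ∀ v w, (ΘD v).mulVec w = (ΘD w).mulVec v := by
    intro v w
    rw [hΘDv, hΘDv]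
    have hfd' : (fun z => LinearMap.toContinuousLinearMap (Θ z).mulVecLin) = fderiv ℝ φ := by
      funext z; exact (hfd z).symm
    exact second_derivative_symmetric (f := φ) (fun z => hΘ z) (hfd' ▸ hF2) v w
  -- Identity from differentiating the pushforward relation in x
  have hI1 : ∀ v, (A' (φ x) u).mulVec ((Θ x).mulVec v) =
      (Θ x).mulVec ((A x u).mulVec v) + (ΘD v).mulVec (f x u) := by
    have hL : HasFDerivAt (fun z => f' (φ z) u)
        ((LinearMap.toContinuousLinearMap (A' (φ x) u).mulVecLin).comp
          (LinearMap.toContinuousLinearMap (Θ x).mulVecLin)) x :=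
      (hA' u (φ x)).comp x (hΘ x)
    have hR : HasFDerivAt (fun z => (mulVecL n n (Θ z)) (f z u))
        (((mulVecL n n (Θ x)).comp (LinearMap.toContinuousLinearMap (A x u).mulVecLin)) +
          ((mulVecL n n).comp ΘD).flip (f x u)) x :=
      HasFDerivAt.clm_apply ((mulVecL n n).hasFDerivAt.comp x hΘD) (hA u x)
    have hEq : (fun z => f' (φ z) u) = fun z => (mulVecL n n (Θ z)) (f z u) := by
      funext z; rw [hpush z u]; rfl
    rw [hEq] at hL
    have huniq := hL.unique hR
    intro v
    have hv := congrArg (fun (L : (Fin n → ℝ) →L[ℝ] (Fin n → ℝ)) => L v) huniq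
    simpa using hv
  -- Identity from differentiating the pushforward relation in u
  have hI2 : ∀ w, (B' (φ x) u).mulVec w = (Θ x).mulVec ((B x u).mulVec w) := by
    have hL := hB' (φ x) u
    have hR : HasFDerivAt (fun w => (Θ x).mulVec (f x w))
        ((LinearMap.toContinuousLinearMap (Θ x).mulVecLin).comp
          (LinearMap.toContinuousLinearMap (B x u).mulVecLin)) u :=
      ((LinearMap.toContinuousLinearMap (Θ x).mulVecLin).hasFDerivAt).comp u (hB x u)
    have hEq : (fun w => f' (φ x) w) = fun w => (Θ x).mulVec (f x w) := by
      funext w; rw [hpush x w]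
    rw [hEq] at hL
    have huniq := hL.unique hR
    intro w
    have hw := congrArg (fun (L : (Fin m → ℝ) →L[ℝ] (Fin n → ℝ)) => L w) huniq
    simpa using hw
  -- Scalar identity: derivative of the quadratic form of the pullback metric
  set quadX : Matrix (Fin n) (Fin n) ℝ →L[ℝ] ℝ :=
    LinearMap.toContinuousLinearMap
      { toFun := fun M => X ⬝ᵥ M.mulVec X
        map_add' := fun M N => by simp [Matrix.add_mulVec, dotProduct_add]
        map_smul' := fun c M => by simp [Matrix.smul_mulVec] } with hquadX
  set ψ' : (Fin n → ℝ) →L[ℝ] (Fin n → ℝ) := ((mulVecL n n).flip X).comp ΘD with hψ'def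
  have hψ'v : ∀ v, ψ' v = (ΘD v).mulVec X := fun v => rfl
  have hq : X ⬝ᵥ (GpD x (f x u)).mulVec X =
      ((ΘD (f x u)).mulVec X) ⬝ᵥ (G (φ x)).mulVec ((Θ x).mulVec X)
      + ((Θ x).mulVec X) ⬝ᵥ (GD (φ x) ((Θ x).mulVec (f x u))).mulVec ((Θ x).mulVec X)
      + ((Θ x).mulVec X) ⬝ᵥ (G (φ x)).mulVec ((ΘD (f x u)).mulVec X) := by
    have h1 : HasFDerivAt (fun z => quadX (pullbackMetric Θ G φ z)) (quadX.comp (GpD x)) x :=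
      quadX.hasFDerivAt.comp x (hGpD x)
    have hψ : HasFDerivAt (fun z => ((mulVecL n n).flip X) (Θ z)) ψ' x :=
      ((mulVecL n n).flip X).hasFDerivAt.comp x hΘD
    have hGφ : HasFDerivAt (fun z => G (φ z))
        ((GD (φ x)).comp (LinearMap.toContinuousLinearMap (Θ x).mulVecLin)) x :=
      (hGD (φ x)).comp x (hΘ x)
    have hc : HasFDerivAt (fun z => mulVecL n n (G (φ z)))
        ((mulVecL n n).comp ((GD (φ x)).comp
          (LinearMap.toContinuousLinearMap (Θ x).mulVecLin))) x :=
      (mulVecL n n).hasFDerivAt.comp x hGφ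
    have hw := hc.clm_apply hψ
    have hd : HasFDerivAt (fun z => dotL n (((mulVecL n n).flip X) (Θ z)))
        ((dotL n).comp ψ') x :=
      (dotL n).hasFDerivAt.comp x hψ
    have hq2 := hd.clm_apply hw
    have hEq : (fun z => quadX (pullbackMetric Θ G φ z)) =
        fun z => (dotL n (((mulVecL n n).flip X) (Θ z)))
          ((mulVecL n n (G (φ z))) (((mulVecL n n).flip X) (Θ z))) := by
      funext z
      show X ⬝ᵥ (pullbackMetric Θ G φ z).mulVec X =
        ((Θ z).mulVec X) ⬝ᵥ (G (φ z)).mulVec ((Θ z).mulVec X)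
      simp [pullbackMetric, ← Matrix.mulVec_mulVec, dot_transpose_mulVec]
    rw [hEq] at h1
    have huniq := h1.unique hq2
    have hv := congrArg (fun (L : (Fin n → ℝ) →L[ℝ] ℝ) => L (f x u)) huniq
    simp only [hquadX, LinearMap.coe_toContinuousLinearMap', LinearMap.coe_mk, AddHom.coe_mk,
      ContinuousLinearMap.comp_apply, ContinuousLinearMap.add_apply,
      ContinuousLinearMap.flip_apply, mulVecL_apply, dotL_apply, hψ'v, dotProduct_add,
      Matrix.mulVecLin_apply, Matrix.mulVec_mulVec] at hv ⊢
    rw [show ((mulVecL n n).flip X) (Θ x) = (Θ x).mulVec X from rfl] at hv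
    simp only [Matrix.mulVec_mulVec] at hv
    linarith
  -- assemble
  have key := hcontr (φ x) u ((Θ x).mulVec X) Y
  have hf'e : f' (φ x) u = (Θ x).mulVec (f x u) := hpush x u
  have hA'X : (A' (φ x) u).mulVec ((Θ x).mulVec X) =
      (Θ x).mulVec ((A x u).mulVec X) + (ΘD (f x u)).mulVec X := by
    rw [hI1 X, hsymm]
  have hLHS : X ⬝ᵥ (((A x u)ᵀ * pullbackMetric Θ G φ x + pullbackMetric Θ G φ x * A x u +
        GpD x (f x u)).mulVec X) + 2 * (Y ⬝ᵥ (((B x u)ᵀ * pullbackMetric Θ G φ x).mulVec X)) =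
      ((Θ x).mulVec X) ⬝ᵥ (((A' (φ x) u)ᵀ * G (φ x) + G (φ x) * A' (φ x) u +
        GD (φ x) (f' (φ x) u)).mulVec ((Θ x).mulVec X)) +
        2 * (Y ⬝ᵥ (((B' (φ x) u)ᵀ * G (φ x)).mulVec ((Θ x).mulVec X))) := by
    simp only [pullbackMetric, Matrix.add_mulVec, dotProduct_add, hq, hf'e,
      ← Matrix.mulVec_mulVec, dot_transpose_mulVec, hA'X, hI2, Matrix.mulVec_add,
      add_dotProduct]
    ring
  have hRHS : X ⬝ᵥ (pullbackMetric Θ G φ x).mulVec X =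
      ((Θ x).mulVec X) ⬝ᵥ (G (φ x)).mulVec ((Θ x).mulVec X) := by
    simp [pullbackMetric, ← Matrix.mulVec_mulVec, dot_transpose_mulVec]
  rw [hLHS, hRHS]
  exact key
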